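/- arXiv:1212.2143 — 2 statements merged into one kernel-verified Lean document; each statement's English description precedes it below -/
import Mathlib

section
/- Let R be a commutative ring, S ⊆ R a multiplicative subset, and let P be a bounded chain complex of finitely generated projective R-modules, concentrated in nonnegative degrees, such that the localized complex S⁻¹P is exact. Then there exists s ∈ S and R-linear maps e : P_i → P_{i+1} satisfying d∘e + e∘d = s·id; that is, P admits the structure of a T_s-module for some s ∈ S. -/
set_option autoImplicit false
set_option maxHeartbeats 1000000

/-- A chain complex of `R`-modules concentrated in nonnegative degrees:
`X 0 ← X 1 ← X 2 ← ⋯` with differential `d i : X (i+1) → X i`. -/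
structure Cx (R : Type) [CommRing R] : Type 1 where
  X : ℕ → Type
  [acg : ∀ i, AddCommGroup (X i)]
  [mod : ∀ i, Module R (X i)]
  d : ∀ i : ℕ, X (i + 1) →ₗ[R] X i
  dd : ∀ i : ℕ, (d i).comp (d (i + 1)) = 0

attribute [instance] Cx.acg Cx.mod

namespace Cx

variable {R : Type} [CommRing R]

/-- Transport along an equality of degrees. -/
def xc (C : Cx R) {i j : ℕ} (h : i = j) : C.X i →ₗ[R] C.X j := by
  subst h; exact LinearMap.id

/-- The complex consists of finitely generated projective modules. -/
def FgProj (C : Cx R) : Prop := ∀ i, Module.Finite R (C.X i) ∧ Module.Projective R (C.X i)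

/-- `X i = 0` unless `0 ≤ i ≤ n`. -/
def InRange (C : Cx R) (n : ℕ) : Prop := ∀ i, n < i → Subsingleton (C.X i)

/-- The complex is bounded. -/
def Bounded (C : Cx R) : Prop := ∃ n : ℕ, C.InRange n

/-- `X i = 0` unless `0 ≤ i ≤ n`, for `n ∈ ℕ ∪ {∞}`; for `n = ∞` this just means bounded
(and concentrated in nonnegative degrees, which is automatic here). -/
def InRangeE (C : Cx R) : ℕ∞ → Prop
  | (n : ℕ) => C.InRange n
  | ⊤ => C.Bounded

theorem InRange.mono {C : Cx R} {k n : ℕ} (h : k ≤ n) (H : C.InRange k) : C.InRange n :=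
  fun i hi => H i (lt_of_le_of_lt h hi)

/-- The complex is exact (including surjectivity onto degree 0, since the complex is
concentrated in nonnegative degrees). -/
def Acyclic (C : Cx R) : Prop :=
  (∀ i, Function.Exact (C.d (i + 1)) (C.d i)) ∧ Function.Surjective (C.d 0)

/-- The localization of a linear map. -/
noncomputable def locMap (S : Submonoid R) {M N : Type} [AddCommGroup M] [Module R M]
    [AddCommGroup N] [Module R N] (g : M →ₗ[R] N) :
    LocalizedModule S M →ₗ[R] LocalizedModule S N :=
  IsLocalizedModule.map S (LocalizedModule.mkLinearMap S M) (LocalizedModule.mkLinearMap S N) g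

/-- `S⁻¹C` is an exact complex. -/
def SExact (C : Cx R) (S : Submonoid R) : Prop :=
  (∀ i, Function.Exact (locMap S (C.d (i + 1))) (locMap S (C.d i))) ∧
    Function.Surjective (locMap S (C.d 0))

/-- Chain maps. -/
structure Hom (A B : Cx R) : Type where
  f : ∀ i, A.X i →ₗ[R] B.X i
  comm : ∀ i, (f i).comp (A.d i) = (B.d i).comp (f (i + 1))

/-- Isomorphism of chain complexes. -/
def Iso (A B : Cx R) : Prop := ∃ φ : Hom A B, ∀ i, Function.Bijective (φ.f i)

/-- `0 → A → B → C → 0` is short exact. -/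
def IsSES {A B C : Cx R} (φ : Hom A B) (ψ : Hom B C) : Prop :=
  ∀ i, Function.Injective (φ.f i) ∧ Function.Surjective (ψ.f i) ∧
    Function.Exact (φ.f i) (ψ.f i)

/-- There is a short exact sequence `0 → A → B → C → 0`. -/
def SES (A B C : Cx R) : Prop := ∃ (φ : Hom A B) (ψ : Hom B C), IsSES φ ψ

end Cx

theorem projective_fin_fun {R : Type} [CommRing R] (c : ℕ) (P : Type) [AddCommGroup P]
    [Module R P] [Module.Projective R P] : Module.Projective R (Fin c → P) := by
  haveI : Module.Projective R (DirectSum (Fin c) (fun _ => P)) :=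
    inferInstanceAs (Module.Projective R (Π₀ _ : Fin c, P))
  exact Module.Projective.of_equiv (DirectSum.linearEquivFunOnFintype R (Fin c) (fun _ => P))

/-- The differential out of degree `i` (into degree `i - 1`; zero for `i = 0`). -/
def Cx.dOut {R : Type} [CommRing R] (C : Cx R) (i : ℕ) : C.X i →ₗ[R] C.X (i - 1) :=
  if _h : 1 ≤ i then (C.d (i - 1)).comp (C.xc (show i = (i - 1) + 1 by omega)) else 0

/-!
Build `e` degree by degree. If `d e + e d = s` holds on `X 0, …, X k`, then
`φ = s - e_k d_k` is a cycle on `X (k+1)`, so by exactness of `S⁻¹C` it lies in the image of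
`d (k+1)` after localizing. As `X (k+1)` is finitely generated projective, it lifts to
`S⁻¹X (k+2)` and the lift's denominators can be cleared: `d (k+1) ∘ g = t • φ` for some
`t ∈ S`. Replacing `e` by `t • e` and `e (k+1)` by `g` gives the relation on `X (k+1)` for
`t * s`. Boundedness of `C` ends the induction.
-/

section Localization

variable {R : Type} [CommRing R] (S : Submonoid R) {M N Q P : Type}
  [AddCommGroup M] [Module R M] [AddCommGroup N] [Module R N]
  [AddCommGroup Q] [Module R Q] [AddCommGroup P] [Module R P]
  [Module.Finite R M] [Module.Projective R M]

theorem exists_comp_eq_smul_of_range_le (f : N →ₗ[R] Q) (φ : M →ₗ[R] Q)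
    (h : LinearMap.range (LocalizedModule.mkLinearMap S Q ∘ₗ φ) ≤
      LinearMap.range (Cx.locMap S f)) :
    ∃ t ∈ S, ∃ g : M →ₗ[R] N, f ∘ₗ g = t • φ := by
  have := Module.finitePresentation_of_projective R M
  obtain ⟨ψ, hψ⟩ : ∃ ψ : M →ₗ[R] LocalizedModule S N,
      Cx.locMap S f ∘ₗ ψ = LocalizedModule.mkLinearMap S Q ∘ₗ φ := by
    obtain ⟨ψ, hψ⟩ := Module.projective_lifting_property (Cx.locMap S f).rangeRestrict
      ((LocalizedModule.mkLinearMap S Q ∘ₗ φ).codRestrict _ fun m => h ⟨m, rfl⟩)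
      (Cx.locMap S f).surjective_rangeRestrict
    exact ⟨ψ, congr((LinearMap.range (Cx.locMap S f)).subtype ∘ₗ $hψ)⟩
  obtain ⟨g, s, hg⟩ := Module.FinitePresentation.exists_lift_of_isLocalizedModule S
    (LocalizedModule.mkLinearMap S N) ψ
  have hloc : LocalizedModule.mkLinearMap S Q ∘ₗ (f ∘ₗ g) =
      LocalizedModule.mkLinearMap S Q ∘ₗ ((s : R) • φ) := by
    rw [← LinearMap.comp_assoc,
      ← IsLocalizedModule.map_comp S (LocalizedModule.mkLinearMap S N), LinearMap.comp_assoc, hg,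
      LinearMap.comp_smul]
    exact congr((s : R) • $hψ).trans (LinearMap.comp_smul _ _ _).symm
  obtain ⟨u, hu⟩ := Module.Finite.exists_smul_of_comp_eq_of_isLocalizedModule S
    (LocalizedModule.mkLinearMap S Q) _ _ hloc
  refine ⟨u * s, mul_mem u.2 s.2, (u : R) • g, ?_⟩
  rw [LinearMap.comp_smul, mul_smul]
  exact hu

variable {S}

theorem exists_comp_eq_smul_of_surjective_locMap {f : N →ₗ[R] Q}
    (hf : Function.Surjective (Cx.locMap S f)) (φ : M →ₗ[R] Q) :
    ∃ t ∈ S, ∃ g : M →ₗ[R] N, f ∘ₗ g = t • φ :=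
  exists_comp_eq_smul_of_range_le S f φ (LinearMap.range_eq_top.mpr hf ▸ le_top)

theorem exists_comp_eq_smul_of_exact_locMap {f : N →ₗ[R] Q} {g : Q →ₗ[R] P}
    (hfg : Function.Exact (Cx.locMap S f) (Cx.locMap S g)) {φ : M →ₗ[R] Q}
    (hφ : g ∘ₗ φ = 0) :
    ∃ t ∈ S, ∃ h : M →ₗ[R] N, f ∘ₗ h = t • φ := by
  refine exists_comp_eq_smul_of_range_le S f φ ?_
  rintro _ ⟨m, rfl⟩
  refine (hfg _).mp ?_
  rw [Cx.locMap, LinearMap.comp_apply, IsLocalizedModule.map_apply, ← LinearMap.comp_apply g,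
    hφ, LinearMap.zero_apply, map_zero]

end Localization

namespace Cx

variable {R : Type} [CommRing R] {C : Cx R}

/-- `e` is a null-homotopy of `s • id` on `X 0, …, X k`. -/
def IsPartialNullHomotopy (C : Cx R) (s : R) (e : ∀ i, C.X i →ₗ[R] C.X (i + 1)) (k : ℕ) :
    Prop :=
  C.d 0 ∘ₗ e 0 = s • LinearMap.id ∧
    ∀ i < k, C.d (i + 1) ∘ₗ e (i + 1) + e i ∘ₗ C.d i = s • LinearMap.id

namespace IsPartialNullHomotopy

variable {s : R} {e : ∀ i, C.X i →ₗ[R] C.X (i + 1)} {k : ℕ}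

theorem d_comp_sub_eq_zero (h : C.IsPartialNullHomotopy s e k) :
    C.d k ∘ₗ (s • LinearMap.id - e k ∘ₗ C.d k) = 0 := by
  have hde : C.d k ∘ₗ e k ∘ₗ C.d k = s • C.d k := by
    cases k with
    | zero => rw [← LinearMap.comp_assoc, h.1, LinearMap.smul_comp, LinearMap.id_comp]
    | succ j =>
      rw [← LinearMap.comp_assoc, eq_sub_of_add_eq (h.2 j j.lt_succ_self), LinearMap.sub_comp,
        LinearMap.comp_assoc, C.dd, LinearMap.comp_zero, sub_zero, LinearMap.smul_comp,
        LinearMap.id_comp]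
  rw [LinearMap.comp_sub, hde, LinearMap.comp_smul, LinearMap.comp_id, sub_self]

theorem extend {t : R} {g : C.X (k + 1) →ₗ[R] C.X (k + 1 + 1)}
    (h : C.IsPartialNullHomotopy s e k)
    (hg : C.d (k + 1) ∘ₗ g = t • (s • LinearMap.id - e k ∘ₗ C.d k)) :
    C.IsPartialNullHomotopy (t * s) (Function.update (t • e) (k + 1) g) (k + 1) := by
  refine ⟨?_, fun i hi => ?_⟩
  · rw [Function.update_of_ne (by omega), Pi.smul_apply, LinearMap.comp_smul, h.1, smul_smul]
  · rcases Nat.lt_succ_iff_lt_or_eq.mp hi with hi | rfl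
    · rw [Function.update_of_ne (by omega), Function.update_of_ne (by omega), Pi.smul_apply,
        Pi.smul_apply, LinearMap.comp_smul, LinearMap.smul_comp, ← smul_add, h.2 i hi, smul_smul]
    · rw [Function.update_self, Function.update_of_ne (by omega), hg, Pi.smul_apply,
        LinearMap.smul_comp, ← smul_add, sub_add_cancel, smul_smul]

theorem of_inRange {n : ℕ} (hn : C.InRange n) (h : C.IsPartialNullHomotopy s e n) (i : ℕ) :
    C.d (i + 1) ∘ₗ e (i + 1) + e i ∘ₗ C.d i = s • LinearMap.id := by
  by_cases hi : i < n
  · exact h.2 i hi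
  · have := hn (i + 1) (by omega)
    exact Subsingleton.elim _ _

end IsPartialNullHomotopy

theorem exists_isPartialNullHomotopy {S : Submonoid R} (hfg : C.FgProj) (hex : C.SExact S)
    (k : ℕ) : ∃ s ∈ S, ∃ e, C.IsPartialNullHomotopy s e k := by
  have := fun i => (hfg i).1
  have := fun i => (hfg i).2
  induction k with
  | zero =>
    obtain ⟨s, hs, g, hg⟩ := exists_comp_eq_smul_of_surjective_locMap hex.2 LinearMap.id
    exact ⟨s, hs, Function.update 0 0 g, by rwa [Function.update_self],
      fun i hi => absurd hi (Nat.not_lt_zero i)⟩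
  | succ k ih =>
    obtain ⟨s, hs, e, he⟩ := ih
    obtain ⟨t, ht, g, hg⟩ := exists_comp_eq_smul_of_exact_locMap (hex.1 k) he.d_comp_sub_eq_zero
    exact ⟨t * s, mul_mem ht hs, _, he.extend hg⟩

end Cx

theorem stmt6 (R : Type) [CommRing R] (S : Submonoid R) (C : Cx R)
    (hfg : C.FgProj) (hb : C.Bounded) (hex : C.SExact S) :
    ∃ s ∈ S, ∃ e : ∀ i, C.X i →ₗ[R] C.X (i + 1),
      ((C.d 0).comp (e 0) = s • LinearMap.id) ∧
      (∀ i, (C.d (i + 1)).comp (e (i + 1)) + (e i).comp (C.d i) = s • LinearMap.id) := by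
  obtain ⟨n, hn⟩ := hb
  obtain ⟨s, hs, e, he⟩ := C.exists_isPartialNullHomotopy hfg hex n
  exact ⟨s, hs, e, he.1, he.of_inRange hn⟩
end

section
/- Let R be a commutative ring and let 0 → A → B → C → 0 be a short exact sequence of bounded chain complexes of finitely generated projective R-modules concentrated in nonnegative degrees. Suppose A carries a T_s-module structure f and C carries a T_t-module structure e (for elements s, t ∈ R). Then there exists a T_{st}-module structure g on B (R-linear maps g : B_i → B_{i+1} with d∘g + g∘d = st·id) such that the maps A → B and B → C are morphisms of T_{st}-modules, where A is given the restricted T_{st}-structure t·f and C is given the restricted T_{st}-structure s·e. -/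
set_option autoImplicit false
set_option maxHeartbeats 1000000

/-!
Choose degreewise splittings `σ` of `ψ` and `r` of `φ` (possible since `C` is degreewise
projective) and lift `f` to `fB = φ f r` on `B`. The defect `v = s - (d fB + fB d)` is a chain map
`B → B` vanishing on `A`, so it factors as `v = w ψ` through the chain map `w = v σ : C → B`,
and `ψ v = s ψ` because `ψ fB = 0`. Then `g = t fB + w e ψ` works:
`d g + g d = t (s - v) + w (d e + e d) ψ = s t - t v + t w ψ = s t`.
-/

open LinearMap

theorem Function.Exact.comp_section_comp {R M N P Q : Type*} [Semiring R] [AddCommGroup M]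
    [AddCommGroup N] [AddCommGroup P] [AddCommGroup Q] [Module R M] [Module R N] [Module R P]
    [Module R Q] {f : M →ₗ[R] N} {g : N →ₗ[R] P} (hfg : Function.Exact f g)
    {l : P →ₗ[R] N} (hl : g ∘ₗ l = LinearMap.id) {v : N →ₗ[R] Q} (hv : v ∘ₗ f = 0) :
    v ∘ₗ l ∘ₗ g = v := by
  ext x
  obtain ⟨y, hy⟩ := (hfg (l (g x) - x)).mp (by simp [← LinearMap.comp_apply g l, hl])
  have hvy := congr($hv y)
  simpa only [LinearMap.comp_apply, LinearMap.zero_apply, hy, map_sub, sub_eq_zero] using hvy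

namespace Cx

variable {R : Type} [CommRing R] {A B C D : Cx R}

@[simp]
theorem d_d_apply (C : Cx R) (i : ℕ) (x : C.X (i + 2)) : C.d i (C.d (i + 1) x) = 0 :=
  congr($(C.dd i) x)

def nullHomotopicMap (h : ∀ i, B.X i →ₗ[R] C.X (i + 1)) : ∀ i, B.X i →ₗ[R] C.X i
  | 0 => C.d 0 ∘ₗ h 0
  | i + 1 => C.d (i + 1) ∘ₗ h (i + 1) + h i ∘ₗ B.d i

theorem nullHomotopicMap_add (h k : ∀ i, B.X i →ₗ[R] C.X (i + 1)) (i : ℕ) :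
    nullHomotopicMap (fun i => h i + k i) i = nullHomotopicMap h i + nullHomotopicMap k i := by
  cases i <;> simp only [nullHomotopicMap, comp_add, add_comp]; abel

theorem nullHomotopicMap_smul (c : R) (h : ∀ i, B.X i →ₗ[R] C.X (i + 1)) (i : ℕ) :
    nullHomotopicMap (fun i => c • h i) i = c • nullHomotopicMap h i := by
  cases i <;> simp only [nullHomotopicMap, comp_smul, smul_comp, smul_add]

theorem nullHomotopicMap_zero (i : ℕ) :
    nullHomotopicMap (fun i => (0 : B.X i →ₗ[R] C.X (i + 1))) i = 0 := by
  cases i <;> simp [nullHomotopicMap]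

theorem comp_nullHomotopicMap (ψ : Hom C D) (h : ∀ i, B.X i →ₗ[R] C.X (i + 1)) (i : ℕ) :
    ψ.f i ∘ₗ nullHomotopicMap h i = nullHomotopicMap (fun i => ψ.f (i + 1) ∘ₗ h i) i := by
  cases i <;> simp only [nullHomotopicMap, comp_add, ← comp_assoc, ψ.comm]

theorem nullHomotopicMap_comp (φ : Hom A B) (h : ∀ i, B.X i →ₗ[R] C.X (i + 1)) (i : ℕ) :
    nullHomotopicMap h i ∘ₗ φ.f i = nullHomotopicMap (fun i => h i ∘ₗ φ.f i) i := by
  cases i <;> simp only [nullHomotopicMap, add_comp, comp_assoc, φ.comm]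

theorem d_comp_nullHomotopicMap (h : ∀ i, B.X i →ₗ[R] C.X (i + 1)) (i : ℕ) :
    C.d i ∘ₗ nullHomotopicMap h (i + 1) = nullHomotopicMap h i ∘ₗ B.d i := by
  ext x
  cases i <;> simp [nullHomotopicMap]

def Hom.descend {φ : Hom A B} {ψ : Hom B C} (σ : ∀ i, C.X i →ₗ[R] B.X i)
    (hσ : ∀ i, ψ.f i ∘ₗ σ i = LinearMap.id) (hex : ∀ i, Function.Exact (φ.f i) (ψ.f i))
    (v : Hom B D) (hv : ∀ i, v.f i ∘ₗ φ.f i = 0) : Hom C D where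
  f i := v.f i ∘ₗ σ i
  comm i := by
    calc v.f i ∘ₗ σ i ∘ₗ C.d i
      _ = v.f i ∘ₗ σ i ∘ₗ (C.d i ∘ₗ ψ.f (i + 1)) ∘ₗ σ (i + 1) := by
        rw [comp_assoc, hσ, comp_id]
      _ = (v.f i ∘ₗ σ i ∘ₗ ψ.f i) ∘ₗ B.d i ∘ₗ σ (i + 1) := by
        rw [← ψ.comm]; simp only [comp_assoc]
      _ = D.d i ∘ₗ v.f (i + 1) ∘ₗ σ (i + 1) := by
        rw [(hex i).comp_section_comp (hσ i) (hv i), ← comp_assoc, v.comm, comp_assoc]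

theorem Hom.descend_comp {φ : Hom A B} {ψ : Hom B C} (σ : ∀ i, C.X i →ₗ[R] B.X i)
    (hσ : ∀ i, ψ.f i ∘ₗ σ i = LinearMap.id) (hex : ∀ i, Function.Exact (φ.f i) (ψ.f i))
    (v : Hom B D) (hv : ∀ i, v.f i ∘ₗ φ.f i = 0) (i : ℕ) :
    (descend σ hσ hex v hv).f i ∘ₗ ψ.f i = v.f i :=
  (hex i).comp_section_comp (hσ i) (hv i)

theorem exists_nullHomotopicMap_eq_mul {φ : Hom A B} {ψ : Hom B C}
    (hex : ∀ i, Function.Exact (φ.f i) (ψ.f i))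
    {σ : ∀ i, C.X i →ₗ[R] B.X i} (hσ : ∀ i, ψ.f i ∘ₗ σ i = LinearMap.id)
    {r : ∀ i, B.X i →ₗ[R] A.X i} (hr : ∀ i, r i ∘ₗ φ.f i = LinearMap.id) {s t : R}
    {f : ∀ i, A.X i →ₗ[R] A.X (i + 1)} (hf : ∀ i, nullHomotopicMap f i = s • LinearMap.id)
    {e : ∀ i, C.X i →ₗ[R] C.X (i + 1)} (he : ∀ i, nullHomotopicMap e i = t • LinearMap.id) :
    ∃ g : ∀ i, B.X i →ₗ[R] B.X (i + 1),
      (∀ i, nullHomotopicMap g i = (s * t) • LinearMap.id) ∧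
      (∀ i, φ.f (i + 1) ∘ₗ (t • f i) = g i ∘ₗ φ.f i) ∧
      (∀ i, ψ.f (i + 1) ∘ₗ g i = (s • e i) ∘ₗ ψ.f i) := by
  set fB : ∀ i, B.X i →ₗ[R] B.X (i + 1) := fun i => φ.f (i + 1) ∘ₗ f i ∘ₗ r i
  have hfBφ : ∀ i, fB i ∘ₗ φ.f i = φ.f (i + 1) ∘ₗ f i := fun i => by
    simp only [fB, comp_assoc, hr, comp_id]
  have hψfB : ∀ i, ψ.f (i + 1) ∘ₗ fB i = 0 := fun i => by
    simp only [fB, ← comp_assoc, (hex _).linearMap_comp_eq_zero, zero_comp]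
  let v : Hom B B :=
    ⟨fun i => s • LinearMap.id - nullHomotopicMap fB i, fun i => by
      simp only [comp_sub, sub_comp, d_comp_nullHomotopicMap, comp_smul, smul_comp, comp_id,
        id_comp]⟩
  have hvφ : ∀ i, v.f i ∘ₗ φ.f i = 0 := fun i => by
    simp only [v, sub_comp, nullHomotopicMap_comp, hfBφ, ← comp_nullHomotopicMap, hf, smul_comp,
      comp_smul, id_comp, comp_id, sub_self]
  have hψv : ∀ i, ψ.f i ∘ₗ v.f i = s • ψ.f i := fun i => by
    simp only [v, comp_sub, comp_nullHomotopicMap, hψfB, nullHomotopicMap_zero, comp_smul,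
      comp_id, sub_zero]
  let w := Hom.descend σ hσ hex v hvφ
  refine ⟨fun i => t • fB i + w.f (i + 1) ∘ₗ e i ∘ₗ ψ.f i, fun i => ?_, fun i => ?_, fun i => ?_⟩
  · calc nullHomotopicMap (fun i => t • fB i + w.f (i + 1) ∘ₗ e i ∘ₗ ψ.f i) i
      _ = t • nullHomotopicMap fB i + w.f i ∘ₗ nullHomotopicMap e i ∘ₗ ψ.f i := by
        rw [nullHomotopicMap_add, nullHomotopicMap_smul, nullHomotopicMap_comp ψ e,
          comp_nullHomotopicMap w (fun i => e i ∘ₗ ψ.f i)]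
      _ = t • (s • LinearMap.id - v.f i) + t • (w.f i ∘ₗ ψ.f i) := by
        rw [he, smul_comp, id_comp, comp_smul]; simp only [v, sub_sub_cancel]
      _ = (s * t) • LinearMap.id := by
        rw [Hom.descend_comp, smul_sub, sub_add_cancel, smul_smul, mul_comm]
  · simp only [add_comp, smul_comp, comp_smul, comp_assoc, (hex i).linearMap_comp_eq_zero,
      comp_zero, add_zero, hfBφ]
  · calc ψ.f (i + 1) ∘ₗ (t • fB i + w.f (i + 1) ∘ₗ e i ∘ₗ ψ.f i)
      _ = ((ψ.f (i + 1) ∘ₗ v.f (i + 1)) ∘ₗ σ (i + 1)) ∘ₗ e i ∘ₗ ψ.f i := by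
        rw [comp_add, comp_smul, hψfB, smul_zero, zero_add]; rfl
      _ = (s • e i) ∘ₗ ψ.f i := by
        rw [hψv, smul_comp, hσ, smul_comp, id_comp, smul_comp]

theorem IsSES.exists_splitting {φ : Hom A B} {ψ : Hom B C} (hse : IsSES φ ψ)
    (hC : ∀ i, Module.Projective R (C.X i)) :
    ∃ (σ : ∀ i, C.X i →ₗ[R] B.X i) (r : ∀ i, B.X i →ₗ[R] A.X i),
      (∀ i, ψ.f i ∘ₗ σ i = LinearMap.id) ∧ ∀ i, r i ∘ₗ φ.f i = LinearMap.id := by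
  have hσ (i : ℕ) : ∃ σ : C.X i →ₗ[R] B.X i, ψ.f i ∘ₗ σ = LinearMap.id :=
    have := hC i
    Module.projective_lifting_property (ψ.f i) LinearMap.id (hse i).2.1
  have hr (i : ℕ) : ∃ r : B.X i →ₗ[R] A.X i, r ∘ₗ φ.f i = LinearMap.id :=
    (((hse i).2.2.split_tfae (hse i).1 (hse i).2.1).out 0 1).mp (hσ i)
  choose σ hσ using hσ
  choose r hr using hr
  exact ⟨σ, r, hσ, hr⟩

end Cx

theorem stmt7_general (R : Type) [CommRing R] (s t : R) (A B C : Cx R)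
    (hC : C.FgProj)
    (φ : Cx.Hom A B) (ψ : Cx.Hom B C) (hse : Cx.IsSES φ ψ)
    (f : ∀ i, A.X i →ₗ[R] A.X (i + 1))
    (hf0 : (A.d 0).comp (f 0) = s • LinearMap.id)
    (hf : ∀ i, (A.d (i + 1)).comp (f (i + 1)) + (f i).comp (A.d i) = s • LinearMap.id)
    (e : ∀ i, C.X i →ₗ[R] C.X (i + 1))
    (he0 : (C.d 0).comp (e 0) = t • LinearMap.id)
    (he : ∀ i, (C.d (i + 1)).comp (e (i + 1)) + (e i).comp (C.d i) = t • LinearMap.id) :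
    ∃ g : ∀ i, B.X i →ₗ[R] B.X (i + 1),
      ((B.d 0).comp (g 0) = (s * t) • LinearMap.id) ∧
      (∀ i, (B.d (i + 1)).comp (g (i + 1)) + (g i).comp (B.d i) = (s * t) • LinearMap.id) ∧
      (∀ i, (φ.f (i + 1)).comp (t • f i) = (g i).comp (φ.f i)) ∧
      (∀ i, (ψ.f (i + 1)).comp (g i) = (s • e i).comp (ψ.f i)) := by
  obtain ⟨σ, r, hσ, hr⟩ := hse.exists_splitting fun i => (hC i).2
  have hfA : ∀ i, Cx.nullHomotopicMap f i = s • LinearMap.id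
    | 0 => hf0
    | i + 1 => hf i
  have heC : ∀ i, Cx.nullHomotopicMap e i = t • LinearMap.id
    | 0 => he0
    | i + 1 => he i
  obtain ⟨g, hg, hgφ, hgψ⟩ :=
    Cx.exists_nullHomotopicMap_eq_mul (fun i => (hse i).2.2) hσ hr hfA heC
  exact ⟨g, hg 0, fun i => hg (i + 1), hgφ, hgψ⟩

theorem stmt7 (R : Type) [CommRing R] (s t : R) (A B C : Cx R)
    (hA : A.FgProj) (hB : B.FgProj) (hC : C.FgProj)
    (hbA : A.Bounded) (hbB : B.Bounded) (hbC : C.Bounded)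
    (φ : Cx.Hom A B) (ψ : Cx.Hom B C) (hse : Cx.IsSES φ ψ)
    (f : ∀ i, A.X i →ₗ[R] A.X (i + 1))
    (hf0 : (A.d 0).comp (f 0) = s • LinearMap.id)
    (hf : ∀ i, (A.d (i + 1)).comp (f (i + 1)) + (f i).comp (A.d i) = s • LinearMap.id)
    (e : ∀ i, C.X i →ₗ[R] C.X (i + 1))
    (he0 : (C.d 0).comp (e 0) = t • LinearMap.id)
    (he : ∀ i, (C.d (i + 1)).comp (e (i + 1)) + (e i).comp (C.d i) = t • LinearMap.id) :
    ∃ g : ∀ i, B.X i →ₗ[R] B.X (i + 1),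
      ((B.d 0).comp (g 0) = (s * t) • LinearMap.id) ∧
      (∀ i, (B.d (i + 1)).comp (g (i + 1)) + (g i).comp (B.d i) = (s * t) • LinearMap.id) ∧
      (∀ i, (φ.f (i + 1)).comp (t • f i) = (g i).comp (φ.f i)) ∧
      (∀ i, (ψ.f (i + 1)).comp (g i) = (s • e i).comp (ψ.f i)) :=
  stmt7_general R s t A B C hC φ ψ hse f hf0 hf e he0 he
end
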